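/- Let n ≥ 3, y ∈ ℝⁿ, a, b ∈ ℝⁿ, λ ∈ ℝ, and let A ∈ ℝ^{n×n} be skew-symmetric. Define the vector field w(x) := a + A(x−y) + λ(x−y) + ⟨b, x−y⟩(x−y) − (1/2)|x−y|² b. Then l(w) = 0, i.e., the trace-free part of the symmetric part of the differential matrix of w vanishes identically. -/

import Mathlib

open MeasureTheory Metric Set Matrix
open scoped BigOperators ENNReal

noncomputable section

abbrev Euc (n : ℕ) := EuclideanSpace ℝ (Fin n)

/-- Differential matrix `(Dv)_{ij} = ∂v_i/∂x_j` (computed via the Fréchet derivative). -/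
def Dmat {n : ℕ} (v : Euc n → Euc n) (x : Euc n) : Matrix (Fin n) (Fin n) ℝ :=
  fun i j => fderiv ℝ v x (EuclideanSpace.single j 1) i

/-- Symmetric part of the differential matrix. -/
def epsMat {n : ℕ} (v : Euc n → Euc n) (x : Euc n) : Matrix (Fin n) (Fin n) ℝ :=
  (1 / 2 : ℝ) • (Dmat v x + (Dmat v x)ᵀ)

/-- Trace-free part of the symmetric part of the differential matrix. -/
def lMat {n : ℕ} (v : Euc n → Euc n) (x : Euc n) : Matrix (Fin n) (Fin n) ℝ :=
  epsMat v x - (Matrix.trace (Dmat v x) / (n : ℝ)) • (1 : Matrix (Fin n) (Fin n) ℝ)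

/-- Frobenius (Euclidean) norm of a matrix. -/
def matNorm {n : ℕ} (M : Matrix (Fin n) (Fin n) ℝ) : ℝ :=
  Real.sqrt (∑ i, ∑ j, (M i j) ^ 2)

/-- `M : N = Σ_{ij} M_{ij} N_{ij}`. -/
def matDot {n : ℕ} (M N : Matrix (Fin n) (Fin n) ℝ) : ℝ := ∑ i, ∑ j, M i j * N i j

/-- Distance to the boundary of `Ω`. -/
def distBd {n : ℕ} (Ω : Set (Euc n)) (x : Euc n) : ℝ := Metric.infDist x (frontier Ω)

/-- Open axis-parallel cube with center `c` and side length `h`. -/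
def openCube {n : ℕ} (c : Euc n) (h : ℝ) : Set (Euc n) := {x | ∀ i, |x i - c i| < h / 2}

/-- Closed axis-parallel cube with center `c` and side length `h`. -/
def closedCube {n : ℕ} (c : Euc n) (h : ℝ) : Set (Euc n) := {x | ∀ i, |x i - c i| ≤ h / 2}

/-- Bounded John domain: there are `C > 1` and a distinguished point `x₀ ∈ Ω` such that
every point of `Ω` is joined to `x₀` by a rectifiable curve, parameterized by arc length
(hence 1-Lipschitz), along which the distance to the boundary grows linearly. -/
def IsJohnDomain {n : ℕ} (Ω : Set (Euc n)) : Prop :=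
  ∃ C > (1 : ℝ), ∃ x₀ ∈ Ω, ∀ y ∈ Ω, ∃ L : ℝ, 0 ≤ L ∧ ∃ γ : ℝ → Euc n,
    γ 0 = y ∧ γ L = x₀ ∧ (∀ t ∈ Icc 0 L, γ t ∈ Ω) ∧
    (∀ s ∈ Icc 0 L, ∀ t ∈ Icc 0 L, dist (γ s) (γ t) ≤ |s - t|) ∧
    (∀ t ∈ Icc 0 L, t / C ≤ Metric.infDist (γ t) (frontier Ω))

/-- The matrix-valued functions `H_i`. -/
def Hmat {n : ℕ} (i : Fin n) (z : Euc n) : Matrix (Fin n) (Fin n) ℝ :=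
  fun j k => if j = k then z i else if k = i then z j else if j = i then -z k else 0

/-- The finite-dimensional space `V = D(Σ)`:
`φ(x) = A + λ I + Σ_i b_i H_i(x − y)` with `A` skew-symmetric. -/
def Vset (n : ℕ) : Set (Euc n → Matrix (Fin n) (Fin n) ℝ) :=
  {φ | ∃ (A : Matrix (Fin n) (Fin n) ℝ) (lam : ℝ) (b : Fin n → ℝ) (y : Euc n),
    Aᵀ = -A ∧ ∀ x, φ x = A + lam • (1 : Matrix (Fin n) (Fin n) ℝ) + ∑ i, b i • Hmat i (x - y)}

/-! With `z = x - y`, the differential of `w` at `x` is `A + (z bᵀ - b zᵀ) + (λ + ⟨b, z⟩) I`: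
a skew-symmetric matrix plus a multiple of the identity. The symmetric part of such a matrix
is that multiple of the identity, and since skew-symmetric matrices are trace-free, the
multiple is exactly `tr / n`. -/

theorem lMat_eq_zero_of_Dmat_eq_add_smul_one {n : ℕ} {v : Euc n → Euc n} {x : Euc n}
    {S : Matrix (Fin n) (Fin n) ℝ} (hS : Sᵀ = -S) {c : ℝ} (hD : Dmat v x = S + c • 1) :
    lMat v x = 0 := by
  have hε : epsMat v x = c • 1 := by
    rw [epsMat, hD, transpose_add, hS, transpose_smul, transpose_one]
    module
  have htr : (Dmat v x).trace = c * n := by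
    have htrS : S.trace = 0 := by
      have := congrArg trace hS
      rw [trace_transpose, trace_neg] at this
      linarith
    simp [hD, htrS]
  ext i j
  have hn : (n : ℝ) ≠ 0 := Nat.cast_ne_zero.2 (Fin.pos i).ne'
  rw [lMat, hε, htr, mul_div_cancel_right₀ _ hn, sub_self]

theorem Dmat_apply_of_hasFDerivAt {n : ℕ} {v : Euc n → Euc n} {x : Euc n}
    {L : Fin n → (Euc n →L[ℝ] ℝ)} (hL : ∀ i, HasFDerivAt (fun x => v x i) (L i) x) (i j : Fin n) :
    Dmat v x i j = L i (EuclideanSpace.single j 1) := by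
  have hv : DifferentiableAt ℝ v x := differentiableAt_euclidean.2 fun i => (hL i).differentiableAt
  rw [(hL i).unique ((EuclideanSpace.proj (𝕜 := ℝ) i).hasFDerivAt.comp x hv.hasFDerivAt)]
  rfl

section coordinates

variable {n : ℕ} (y x : Euc n)

theorem hasFDerivAt_coord_sub (k : Fin n) :
    HasFDerivAt (fun x : Euc n => x k - y k) (EuclideanSpace.proj (𝕜 := ℝ) k) x :=
  (EuclideanSpace.proj (𝕜 := ℝ) k).hasFDerivAt.sub_const (y k)

theorem hasFDerivAt_sum_mul_sub (c : Fin n → ℝ) :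
    HasFDerivAt (fun x : Euc n => ∑ k, c k * (x k - y k))
      (∑ k, c k • EuclideanSpace.proj (𝕜 := ℝ) k) x :=
  HasFDerivAt.fun_sum fun k _ => (hasFDerivAt_coord_sub y x k).const_mul (c k)

theorem hasFDerivAt_sum_sub_sq :
    HasFDerivAt (fun x : Euc n => ∑ k, (x k - y k) ^ 2)
      (∑ k, (2 * (x k - y k)) • EuclideanSpace.proj (𝕜 := ℝ) k) x := by
  refine HasFDerivAt.fun_sum fun k _ => ?_
  simpa using (hasFDerivAt_coord_sub y x k).pow 2

end coordinates

theorem Dmat_kernel_field {n : ℕ} (y a b : Euc n) (lam : ℝ)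
    (A : Matrix (Fin n) (Fin n) ℝ) (w : Euc n → Euc n)
    (hw : ∀ x : Euc n, ∀ j : Fin n,
      w x j = a j + (∑ k, A j k * (x k - y k)) + lam * (x j - y j)
        + (∑ i, b i * (x i - y i)) * (x j - y j)
        - (1 / 2) * (∑ i, (x i - y i) ^ 2) * b j) (x : Euc n) :
    Dmat w x = A + (vecMulVec (fun k => x k - y k) (fun k => b k)
        - vecMulVec (fun k => b k) (fun k => x k - y k))
      + (lam + ∑ k, b k * (x k - y k)) • 1 := by
  have hwi (i : Fin n) := ((((hasFDerivAt_const (a i) x).add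
    (hasFDerivAt_sum_mul_sub y x (A i))).add ((hasFDerivAt_coord_sub y x i).const_mul lam)).add
    ((hasFDerivAt_sum_mul_sub y x b).mul (hasFDerivAt_coord_sub y x i))).sub
    (((hasFDerivAt_sum_sub_sq y x).const_mul (1 / 2)).mul_const (b i))
  ext i j
  rw [Dmat_apply_of_hasFDerivAt fun i =>
    (hwi i).congr_of_eventuallyEq (.of_forall fun x => hw x i)]
  simp only [_root_.add_apply, _root_.sub_apply, _root_.sum_apply, _root_.smul_apply,
    _root_.zero_apply, PiLp.proj_apply, PiLp.single_apply, smul_eq_mul, mul_ite, mul_one, mul_zero,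
    Finset.sum_ite_eq', Finset.mem_univ, if_true, Matrix.add_apply, Matrix.sub_apply,
    Matrix.smul_apply, vecMulVec_apply, one_apply]
  split_ifs <;> ring

theorem kernel_field_in_ker_l_general
    (n : ℕ) (y a b : Euc n) (lam : ℝ)
    (A : Matrix (Fin n) (Fin n) ℝ) (hA : Aᵀ = -A) (w : Euc n → Euc n)
    (hw : ∀ x : Euc n, ∀ j : Fin n,
      w x j = a j + (∑ k, A j k * (x k - y k)) + lam * (x j - y j)
        + (∑ i, b i * (x i - y i)) * (x j - y j)
        - (1 / 2) * (∑ i, (x i - y i) ^ 2) * b j) :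
    ∀ x : Euc n, lMat w x = 0 := by
  intro x
  refine lMat_eq_zero_of_Dmat_eq_add_smul_one ?_ (Dmat_kernel_field y a b lam A w hw x)
  rw [transpose_add, transpose_sub, transpose_vecMulVec, transpose_vecMulVec, hA]
  abel

/-- the fields `w(x) = a + A(x−y) + λ(x−y) + ⟨b,x−y⟩(x−y) − (1/2)|x−y|²b`,
with `A` skew-symmetric, satisfy `l(w) ≡ 0`. -/
theorem kernel_field_in_ker_l
    (n : ℕ) (hn : 3 ≤ n) (y a b : Euc n) (lam : ℝ)
    (A : Matrix (Fin n) (Fin n) ℝ) (hA : Aᵀ = -A) (w : Euc n → Euc n)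
    (hw : ∀ x : Euc n, ∀ j : Fin n,
      w x j = a j + (∑ k, A j k * (x k - y k)) + lam * (x j - y j)
        + (∑ i, b i * (x i - y i)) * (x j - y j)
        - (1 / 2) * (∑ i, (x i - y i) ^ 2) * b j) :
    ∀ x : Euc n, lMat w x = 0 :=
  kernel_field_in_ker_l_general n y a b lam A hA w hw

end
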